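/- arXiv:1903.01271 — 5 statements merged into one kernel-verified Lean document; each statement's English description precedes it below -/
import Mathlib

section
/- Let H and A be Hermitian n×n complex matrices, and let Γ = exp(−H)/Tr[exp(−H)] be the associated Gibbs state. Then the function ε ↦ Tr[A exp(−H+εA)] / Tr[exp(−H+εA)] is differentiable at ε = 0 and its derivative there equals ∫₀¹ Var^{(s)}_Γ(A) ds, where Var^{(s)}_Γ(A) := Tr[A Γ^s A Γ^{1−s}] − (Tr[AΓ])². -/
open Matrix MeasureTheory

/-- Functional calculus for Hermitian matrices: apply `f` to the eigenvalues. -/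
noncomputable def matFun {n : ℕ} (f : ℝ → ℝ) (M : Matrix (Fin n) (Fin n) ℂ) :
    Matrix (Fin n) (Fin n) ℂ :=
  if h : M.IsHermitian then
    (h.eigenvectorUnitary : Matrix (Fin n) (Fin n) ℂ) *
      Matrix.diagonal (fun i => (f (h.eigenvalues i) : ℂ)) *
      star (h.eigenvectorUnitary : Matrix (Fin n) (Fin n) ℂ)
  else 0

/-- Spectral power `M ^ s` of a Hermitian matrix, via the functional calculus. -/
noncomputable def matRpow {n : ℕ} (M : Matrix (Fin n) (Fin n) ℂ) (s : ℝ) :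
    Matrix (Fin n) (Fin n) ℂ :=
  matFun (fun x => x ^ s) M

/-- The quantum `s`-variance `Var^{(s)}_Γ(A) = Tr[A Γ^s A Γ^{1-s}] - (Tr[A Γ])²`. -/
noncomputable def qVar {n : ℕ} (Γ A : Matrix (Fin n) (Fin n) ℂ) (s : ℝ) : ℂ :=
  (A * matRpow Γ s * A * matRpow Γ (1 - s)).trace - ((A * Γ).trace) ^ 2

/-!
Duhamel's formula `exp X - exp M = ∫₀¹ exp(sX) (X - M) exp((1-s)M) ds` shows that
`ε ↦ exp(-H + εA)` has derivative `∫₀¹ exp(-sH) A exp(-(1-s)H) ds` at `0`. Taking traces, the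
numerator `Tr[A exp(-H + εA)]` has derivative `∫₀¹ Tr[A exp(-sH) A exp(-(1-s)H)] ds`, while by
cyclicity of the trace the denominator has derivative `Tr[A exp(-H)]`. On the other side, with
`Z = Tr[exp(-H)]` the functional calculus gives `Γ^s = Z^{-s} exp(-sH)`, so
`Var^{(s)}_Γ(A) = Z⁻¹ Tr[A exp(-sH) A exp(-(1-s)H)] - (Z⁻¹ Tr[A exp(-H)])²`, and the quotient rule
matches the two sides.
-/

open NormedSpace

section Duhamel

variable {𝔸 : Type*} [NormedRing 𝔸] [NormedAlgebra ℝ 𝔸] [CompleteSpace 𝔸]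

-- `exp` does not depend on the choice of `ℚ`-algebra structure, so the real one can be restricted.
@[fun_prop]
theorem continuous_exp_of_normedAlgebra_real : Continuous (exp : 𝔸 → 𝔸) :=
  letI := NormedAlgebra.restrictScalars ℚ ℝ 𝔸
  exp_continuous

theorem hasDerivAt_exp_smul_mul_exp_one_sub_smul (X M : 𝔸) (s : ℝ) :
    HasDerivAt (fun u : ℝ => exp (u • X) * exp ((1 - u) • M))
      (exp (s • X) * (X - M) * exp ((1 - s) • M)) s := by
  have hX := hasDerivAt_exp_smul_const (𝕂 := ℝ) X s
  have hM : HasDerivAt (fun u : ℝ => exp ((1 - u) • M)) (-(M * exp ((1 - s) • M))) s := by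
    simpa [Function.comp_def] using (hasDerivAt_exp_smul_const' (𝕂 := ℝ) M (1 - s)).scomp s
      ((hasDerivAt_id s).const_sub 1)
  convert hX.mul hM using 1
  · rfl
  · rw [mul_sub, sub_mul, mul_neg, mul_assoc _ M, sub_eq_add_neg]

theorem exp_sub_exp_eq_integral (X M : 𝔸) :
    exp X - exp M = ∫ s in (0:ℝ)..1, exp (s • X) * (X - M) * exp ((1 - s) • M) := by
  have hcont : Continuous fun s : ℝ => exp (s • X) * (X - M) * exp ((1 - s) • M) := by
    fun_prop
  rw [intervalIntegral.integral_eq_sub_of_hasDerivAt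
    (fun s _ => hasDerivAt_exp_smul_mul_exp_one_sub_smul X M s) (hcont.intervalIntegrable 0 1)]
  simp

theorem slope_exp_add_smul (M A : 𝔸) {ε : ℝ} (hε : ε ≠ 0) :
    slope (fun ε : ℝ => exp (M + ε • A)) 0 ε
      = ∫ s in (0:ℝ)..1, exp (s • (M + ε • A)) * A * exp ((1 - s) • M) := by
  simp only [slope_def_module, sub_zero, zero_smul, add_zero, exp_sub_exp_eq_integral,
    add_sub_cancel_left, mul_smul_comm, smul_mul_assoc, intervalIntegral.integral_smul,
    inv_smul_smul₀ hε]

theorem hasDerivAt_exp_add_smul (M A : 𝔸) :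
    HasDerivAt (fun ε : ℝ => exp (M + ε • A))
      (∫ s in (0:ℝ)..1, exp (s • M) * A * exp ((1 - s) • M)) 0 := by
  have hcont : Continuous fun ε : ℝ =>
      ∫ s in (0:ℝ)..1, exp (s • (M + ε • A)) * A * exp ((1 - s) • M) :=
    intervalIntegral.continuous_parametric_intervalIntegral_of_continuous' (by fun_prop) 0 1
  rw [hasDerivAt_iff_tendsto_slope]
  have hlim := (hcont.tendsto 0).mono_left (nhdsWithin_le_nhds (s := {0}ᶜ))
  rw [zero_smul, add_zero] at hlim
  refine hlim.congr' ?_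
  filter_upwards [self_mem_nhdsWithin] with ε hε
  exact (slope_exp_add_smul M A hε).symm

end Duhamel

section FunctionalCalculus

variable {𝔸 : Type*} [NormedRing 𝔸] [StarRing 𝔸] [NormedAlgebra ℝ 𝔸]
  [StarModule ℝ 𝔸] [ContinuousFunctionalCalculus ℝ 𝔸 IsSelfAdjoint]

theorem cfc_rpow_smul_exp {a : 𝔸} (ha : IsSelfAdjoint a) {c : ℝ} (hc : 0 < c) (s : ℝ) :
    cfc (fun x : ℝ => x ^ s) (c • exp a) = c ^ s • exp (s • a) := by
  have hpow (x : ℝ) : (c * Real.exp x) ^ s = c ^ s * Real.exp (s • x) := by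
    rw [Real.mul_rpow hc.le (Real.exp_nonneg x), ← Real.exp_mul, mul_comm x, smul_eq_mul]
  calc cfc (fun x : ℝ => x ^ s) (c • exp a)
      = cfc (fun x : ℝ => x ^ s) (cfc (fun x => c * Real.exp x) a) := by
        rw [cfc_const_mul c Real.exp a, CFC.real_exp_eq_normedSpace_exp ha]
    _ = cfc (fun x => c ^ s * Real.exp (s • x)) a := by
        rw [← cfc_comp' (fun x : ℝ => x ^ s) (fun x => c * Real.exp x) a,
          cfc_congr fun x _ => hpow x]
    _ = c ^ s • exp (s • a) := by
        rw [cfc_const_mul (c ^ s) (fun x => Real.exp (s • x)) a, cfc_comp_smul s Real.exp a,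
          CFC.real_exp_eq_normedSpace_exp ((IsSelfAdjoint.all s).smul ha)]

end FunctionalCalculus

section GibbsState

open scoped Matrix.Norms.L2Operator

namespace Matrix

variable {m : Type*} [Fintype m] [DecidableEq m]

theorem IsHermitian.trace_cfc {K : Matrix m m ℂ} (hK : K.IsHermitian) (f : ℝ → ℝ) :
    (cfc f K).trace = ∑ i, (f (hK.eigenvalues i) : ℂ) := by
  rw [hK.cfc_eq, IsHermitian.cfc, Unitary.conjStarAlgAut_apply, trace_mul_cycle,
    Unitary.coe_star_mul_self, one_mul, trace_diagonal]
  rfl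

theorem IsHermitian.trace_exp {K : Matrix m m ℂ} (hK : K.IsHermitian) :
    (NormedSpace.exp K).trace = ((∑ i, Real.exp (hK.eigenvalues i) : ℝ) : ℂ) := by
  rw [← CFC.real_exp_eq_normedSpace_exp hK.isSelfAdjoint, hK.trace_cfc, Complex.ofReal_sum]

theorem hasDerivAt_trace_mul_exp_add_smul (C M A : Matrix m m ℂ) :
    HasDerivAt (fun ε : ℝ => (C * exp (M + (ε : ℂ) • A)).trace)
      (∫ s in (0:ℝ)..1, (C * (exp (s • M) * A * exp ((1 - s) • M))).trace) 0 := by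
  let L : Matrix m m ℂ →L[ℝ] ℂ := LinearMap.toContinuousLinearMap
    ((traceLinearMap m ℂ ℂ).restrictScalars ℝ ∘ₗ LinearMap.mulLeft ℝ C)
  have hcont : Continuous fun s : ℝ => exp (s • M) * A * exp ((1 - s) • M) := by fun_prop
  simp only [Complex.coe_smul]
  have h := L.hasFDerivAt.comp_hasDerivAt (0 : ℝ) (hasDerivAt_exp_add_smul M A)
  exact h.congr_deriv (L.intervalIntegral_comp_comm (hcont.intervalIntegrable 0 1)).symm

theorem hasDerivAt_trace_exp_add_smul (M A : Matrix m m ℂ) :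
    HasDerivAt (fun ε : ℝ => (exp (M + (ε : ℂ) • A)).trace) (A * exp M).trace 0 := by
  have h := hasDerivAt_trace_mul_exp_add_smul 1 M A
  simp only [one_mul] at h
  convert h using 1
  have hcyc (s : ℝ) : (exp (s • M) * A * exp ((1 - s) • M)).trace = (A * exp M).trace := by
    rw [mul_assoc, trace_mul_comm, mul_assoc, ← exp_add_of_commute _ _
      ((Commute.refl M).smul_left _ |>.smul_right _), ← add_smul, sub_add_cancel, one_smul]
  simp [hcyc]

end Matrix

theorem matFun_eq_cfc {n : ℕ} (f : ℝ → ℝ) {M : Matrix (Fin n) (Fin n) ℂ} (hM : M.IsHermitian) :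
    matFun f M = cfc f M := by
  rw [matFun, dif_pos hM, hM.cfc_eq]
  rfl

theorem matRpow_smul_exp {n : ℕ} {K : Matrix (Fin n) (Fin n) ℂ} (hK : K.IsHermitian) {c : ℝ}
    (hc : 0 < c) (s : ℝ) :
    matRpow ((c : ℂ) • exp K) s = ((c ^ s : ℝ) : ℂ) • exp (s • K) := by
  have hherm : ((c : ℂ) • exp K).IsHermitian := by
    rw [Complex.coe_smul]
    exact (IsSelfAdjoint.all c).smul hK.exp
  rw [matRpow, matFun_eq_cfc _ hherm, Complex.coe_smul, Complex.coe_smul,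
    cfc_rpow_smul_exp hK.isSelfAdjoint hc]

theorem qVar_inv_smul_exp {n : ℕ} {K : Matrix (Fin n) (Fin n) ℂ} (hK : K.IsHermitian) {z : ℝ}
    (hz : 0 < z) (A : Matrix (Fin n) (Fin n) ℂ) (s : ℝ) :
    qVar ((z : ℂ)⁻¹ • exp K) A s
      = (z : ℂ)⁻¹ * (A * (exp (s • K) * A * exp ((1 - s) • K))).trace
        - ((z : ℂ)⁻¹ * (A * exp K).trace) ^ 2 := by
  have hpow : z⁻¹ ^ (1 - s) * z⁻¹ ^ s = z⁻¹ := by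
    rw [← Real.rpow_add (inv_pos.2 hz), sub_add_cancel, Real.rpow_one]
  rw [← Complex.ofReal_inv, qVar, matRpow_smul_exp hK (inv_pos.2 hz),
    matRpow_smul_exp hK (inv_pos.2 hz)]
  simp only [mul_smul_comm, smul_mul_assoc, smul_smul, trace_smul, smul_eq_mul, mul_assoc,
    ← Complex.ofReal_mul, hpow]

theorem integral_qVar_inv_smul_exp {n : ℕ} {K : Matrix (Fin n) (Fin n) ℂ} (hK : K.IsHermitian)
    {z : ℝ} (hz : 0 < z) (A : Matrix (Fin n) (Fin n) ℂ) :
    ∫ s in (0:ℝ)..1, qVar ((z : ℂ)⁻¹ • exp K) A s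
      = (z : ℂ)⁻¹ * (∫ s in (0:ℝ)..1, (A * (exp (s • K) * A * exp ((1 - s) • K))).trace)
        - ((z : ℂ)⁻¹ * (A * exp K).trace) ^ 2 := by
  have hcont : Continuous fun s : ℝ => (A * (exp (s • K) * A * exp ((1 - s) • K))).trace := by
    fun_prop
  simp only [qVar_inv_smul_exp hK hz]
  rw [intervalIntegral.integral_sub ((hcont.const_mul _).intervalIntegrable 0 1)
    intervalIntegrable_const, intervalIntegral.integral_const_mul, intervalIntegral.integral_const]
  simp

end GibbsState

theorem linear_response_eq_averaged_variance_general {n : ℕ}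
    (H A : Matrix (Fin n) (Fin n) ℂ) (hH : H.IsHermitian)
    (Γ : Matrix (Fin n) (Fin n) ℂ)
    (hΓ : Γ = ((NormedSpace.exp (-H)).trace)⁻¹ • NormedSpace.exp (-H)) :
    HasDerivAt
      (fun ε : ℝ =>
        (A * NormedSpace.exp (-H + (ε : ℂ) • A)).trace /
          (NormedSpace.exp (-H + (ε : ℂ) • A)).trace)
      (∫ s in (0:ℝ)..1, qVar Γ A s) 0 := by
  rcases isEmpty_or_nonempty (Fin n) with hn | hn
  · have htr (M : Matrix (Fin n) (Fin n) ℂ) : M.trace = 0 := by simp [trace]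
    simpa [htr, qVar] using hasDerivAt_const (0 : ℝ) (0 : ℂ)
  set z := ∑ i, Real.exp (hH.neg.eigenvalues i)
  have hz : 0 < z := Finset.sum_pos (fun i _ => Real.exp_pos _) Finset.univ_nonempty
  have hZ : (exp (-H)).trace = z := hH.neg.trace_exp
  have hZ0 : (exp (-H + ((0 : ℝ) : ℂ) • A)).trace ≠ 0 := by simpa [hZ] using hz.ne'
  refine ((hasDerivAt_trace_mul_exp_add_smul A (-H) A).div
    (hasDerivAt_trace_exp_add_smul (-H) A) hZ0).congr_deriv ?_
  rw [hΓ, hZ, integral_qVar_inv_smul_exp hH.neg hz]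
  simp only [Complex.ofReal_zero, zero_smul, add_zero, hZ]
  field_simp

/-- **Linear response is the averaged quantum variance.**  For Hermitian `H, A` and the Gibbs
state `Γ = exp(-H)/Tr[exp(-H)]`, the map `ε ↦ Tr[A exp(-H+εA)]/Tr[exp(-H+εA)]` is
differentiable at `ε = 0` with derivative `∫₀¹ Var^{(s)}_Γ(A) ds`. -/
theorem linear_response_eq_averaged_variance {n : ℕ}
    (H A : Matrix (Fin n) (Fin n) ℂ) (hH : H.IsHermitian) (hA : A.IsHermitian)
    (Γ : Matrix (Fin n) (Fin n) ℂ)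
    (hΓ : Γ = ((NormedSpace.exp (-H)).trace)⁻¹ • NormedSpace.exp (-H)) :
    HasDerivAt
      (fun ε : ℝ =>
        (A * NormedSpace.exp (-H + (ε : ℂ) • A)).trace /
          (NormedSpace.exp (-H + (ε : ℂ) • A)).trace)
      (∫ s in (0:ℝ)..1, qVar Γ A s) 0 :=
  linear_response_eq_averaged_variance_general H A hH Γ hΓ
end

section
/- Let Γ be a positive definite n×n density matrix and A a Hermitian n×n complex matrix. Then for every s ∈ [0,1], 0 ≤ Var^{(s)}_Γ(A) ≤ Var^{(0)}_Γ(A), where Var^{(0)}_Γ(A) = Tr[A²Γ] − (Tr[AΓ])². -/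
/-!
Diagonalise `Γ = U diag(λ) U*` and write `B = U* A U`, which is again Hermitian. Then
`Tr[A Γ^s A Γ^{1-s}] = ∑ᵢⱼ λⱼ^s λᵢ^{1-s} |Bᵢⱼ|²` and `Tr[AΓ] = ∑ᵢ λᵢ Bᵢᵢ`, so everything is real.
The lower bound: `(∑ λᵢ Bᵢᵢ)² ≤ ∑ λᵢ Bᵢᵢ²` by Cauchy–Schwarz (as `∑ λᵢ = 1`), and the
diagonal terms `i = j` of the double sum are exactly `λᵢ Bᵢᵢ²`. The upper bound: weighted AM–GM
`λⱼ^s λᵢ^{1-s} ≤ s λⱼ + (1-s) λᵢ` termwise, and the symmetry `|Bᵢⱼ| = |Bⱼᵢ|` makes both resulting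
sums equal to the value at `s = 0`.
-/

open Matrix
open scoped ComplexOrder

open Finset

section RpowPairSum

variable {ι : Type*} [Fintype ι] (w : ι → ℝ) (b : ι → ι → ℝ)

/-- With `w` the eigenvalues of `Γ` and `b i j = |A i j|²` in an eigenbasis of `Γ`, this is
`Tr[A Γ^s A Γ^{1-s}]`. -/
noncomputable def rpowPairSum (s : ℝ) : ℝ :=
  ∑ i, ∑ j, w j ^ s * w i ^ (1 - s) * b i j

lemma rpowPairSum_zero : rpowPairSum w b 0 = ∑ i, ∑ j, w i * b i j := by
  simp [rpowPairSum]

variable {w b}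

lemma sum_sum_mul_swap_of_symm (hb : ∀ i j, b i j = b j i) :
    ∑ i, ∑ j, w j * b i j = ∑ i, ∑ j, w i * b i j := by
  rw [Finset.sum_comm]
  simp only [hb]

lemma rpowPairSum_le_rpowPairSum_zero (hw : 0 ≤ w) (hb : 0 ≤ b) (hb_symm : ∀ i j, b i j = b j i)
    {s : ℝ} (hs : s ∈ Set.Icc (0 : ℝ) 1) :
    rpowPairSum w b s ≤ rpowPairSum w b 0 := by
  have amgm : ∀ i j, w j ^ s * w i ^ (1 - s) ≤ s * w j + (1 - s) * w i := fun i j =>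
    Real.geom_mean_le_arith_mean2_weighted hs.1 (sub_nonneg.2 hs.2) (hw j) (hw i) (by ring)
  calc rpowPairSum w b s
      ≤ ∑ i, ∑ j, (s * w j + (1 - s) * w i) * b i j :=
        sum_le_sum fun i _ => sum_le_sum fun j _ => mul_le_mul_of_nonneg_right (amgm i j) (hb i j)
    _ = s * ∑ i, ∑ j, w j * b i j + (1 - s) * ∑ i, ∑ j, w i * b i j := by
        simp only [add_mul, mul_assoc, sum_add_distrib, mul_sum]
    _ = rpowPairSum w b 0 := by
        rw [sum_sum_mul_swap_of_symm hb_symm, rpowPairSum_zero]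
        ring

lemma sq_sum_mul_le_rpowPairSum (hw : 0 ≤ w) (hw_sum : ∑ i, w i = 1) (hb : 0 ≤ b) {d : ι → ℝ}
    (hd : ∀ i, d i ^ 2 ≤ b i i) (s : ℝ) :
    (∑ i, d i * w i) ^ 2 ≤ rpowPairSum w b s := by
  calc (∑ i, d i * w i) ^ 2
      ≤ (∑ i, w i) * ∑ i, w i * b i i :=
        sum_sq_le_sum_mul_sum_of_sq_le_mul _ (fun i _ => hw i)
          (fun i _ => mul_nonneg (hw i) (hb i i)) fun i _ => by
            nlinarith [mul_le_mul_of_nonneg_left (hd i) (sq_nonneg (w i))]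
    _ = ∑ i, w i ^ s * w i ^ (1 - s) * b i i := by
        rw [hw_sum, one_mul]
        refine sum_congr rfl fun i _ => ?_
        rw [← Real.rpow_add' (hw i) (by norm_num), add_sub_cancel, Real.rpow_one]
    _ ≤ rpowPairSum w b s :=
        sum_le_sum fun i _ => single_le_sum (f := fun j => w j ^ s * w i ^ (1 - s) * b i j)
          (fun j _ => mul_nonneg (mul_nonneg (Real.rpow_nonneg (hw j) s)
            (Real.rpow_nonneg (hw i) _)) (hb i j)) (mem_univ i)

end RpowPairSum

open Unitary

section Trace

variable {ι R : Type*} [Fintype ι] [DecidableEq ι]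

lemma Matrix.trace_conjStarAlgAut [CommRing R] [StarRing R] (U : unitary (Matrix ι ι R))
    (X : Matrix ι ι R) : (conjStarAlgAut R _ U X).trace = X.trace := by
  rw [conjStarAlgAut_apply, trace_mul_cycle, coe_star_mul_self, one_mul]

variable [CommSemiring R]

lemma Matrix.trace_mul_diagonal (B : Matrix ι ι R) (v : ι → R) :
    (B * diagonal v).trace = ∑ i, B i i * v i := by
  simp [trace, mul_diagonal]

lemma Matrix.trace_mul_diagonal_mul_mul_diagonal (B : Matrix ι ι R) (v w : ι → R) :
    (B * diagonal v * B * diagonal w).trace = ∑ i, ∑ j, w i * v j * (B i j * B j i) := by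
  rw [trace_mul_diagonal]
  refine sum_congr rfl fun i _ => ?_
  rw [mul_apply, sum_mul]
  refine sum_congr rfl fun j _ => ?_
  rw [mul_diagonal]
  ring

end Trace

namespace Matrix.IsHermitian

section Eigenbasis

variable {ι : Type*} {B : Matrix ι ι ℂ}

lemma mul_apply_swap_eq_normSq (hB : B.IsHermitian) (i j : ι) :
    B i j * B j i = Complex.normSq (B i j) := by
  rw [← hB.apply j i, Complex.star_def, Complex.mul_conj]

lemma normSq_apply_comm (hB : B.IsHermitian) (i j : ι) :
    Complex.normSq (B i j) = Complex.normSq (B j i) := by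
  rw [← hB.apply j i, Complex.star_def, Complex.normSq_conj]

variable [Fintype ι] [DecidableEq ι] {Γ : Matrix ι ι ℂ} (hΓ : Γ.IsHermitian)

noncomputable def inEigenbasis (A : Matrix ι ι ℂ) : Matrix ι ι ℂ :=
  conjStarAlgAut ℂ _ (star hΓ.eigenvectorUnitary) A

lemma conjStarAlgAut_inEigenbasis (A : Matrix ι ι ℂ) :
    conjStarAlgAut ℂ _ hΓ.eigenvectorUnitary (hΓ.inEigenbasis A) = A := by
  rw [inEigenbasis, ← conjStarAlgAut_mul_apply, mul_star_self, map_one]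
  rfl

lemma isHermitian_inEigenbasis {A : Matrix ι ι ℂ} (hA : A.IsHermitian) :
    (hΓ.inEigenbasis A).IsHermitian :=
  hA.isSelfAdjoint.map _

lemma trace_mul_eq_sum {A : Matrix ι ι ℂ} (hA : A.IsHermitian) :
    (A * Γ).trace = ∑ i, (((hΓ.inEigenbasis A i i).re * hΓ.eigenvalues i : ℝ) : ℂ) := by
  conv_lhs => rw [hΓ.spectral_theorem, ← hΓ.conjStarAlgAut_inEigenbasis A, ← map_mul,
    trace_conjStarAlgAut, trace_mul_diagonal]
  push_cast
  exact sum_congr rfl fun i _ => by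
    rw [Complex.conj_eq_iff_re.mp ((hΓ.isHermitian_inEigenbasis hA).apply i i)]
    rfl

lemma sum_eigenvalues_eq_one (hΓtr : Γ.trace = 1) :
    ∑ i, hΓ.eigenvalues i = 1 := by
  rw [← RCLike.ofReal_inj (K := ℂ), RCLike.ofReal_sum, ← hΓ.trace_eq_sum_eigenvalues, hΓtr,
    RCLike.ofReal_one]

end Eigenbasis

variable {n : ℕ} {Γ : Matrix (Fin n) (Fin n) ℂ}

lemma matRpow_eq (hΓ : Γ.IsHermitian) (s : ℝ) :
    matRpow Γ s = conjStarAlgAut ℂ _ hΓ.eigenvectorUnitary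
      (diagonal fun i => ((hΓ.eigenvalues i ^ s : ℝ) : ℂ)) := by
  rw [matRpow, matFun, dif_pos hΓ]
  rfl

lemma matRpow_zero (hΓ : Γ.IsHermitian) : matRpow Γ 0 = 1 := by
  simp [hΓ.matRpow_eq]

lemma matRpow_one (hΓ : Γ.IsHermitian) : matRpow Γ 1 = Γ := by
  conv_rhs => rw [hΓ.spectral_theorem]
  simp only [hΓ.matRpow_eq, Real.rpow_one]
  rfl

lemma qVar_zero (hΓ : Γ.IsHermitian) (A : Matrix (Fin n) (Fin n) ℂ) :
    qVar Γ A 0 = (A * A * Γ).trace - ((A * Γ).trace) ^ 2 := by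
  rw [qVar, sub_zero, hΓ.matRpow_zero, hΓ.matRpow_one, mul_one]

variable {A : Matrix (Fin n) (Fin n) ℂ}

lemma trace_mul_matRpow_mul_mul_matRpow (hΓ : Γ.IsHermitian) (hA : A.IsHermitian) (s : ℝ) :
    (A * matRpow Γ s * A * matRpow Γ (1 - s)).trace =
      rpowPairSum hΓ.eigenvalues (fun i j => Complex.normSq (hΓ.inEigenbasis A i j)) s := by
  conv_lhs => rw [hΓ.matRpow_eq, hΓ.matRpow_eq, ← hΓ.conjStarAlgAut_inEigenbasis A, ← map_mul,
    ← map_mul, ← map_mul, trace_conjStarAlgAut, trace_mul_diagonal_mul_mul_diagonal]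
  rw [rpowPairSum]
  push_cast
  simp only [(hΓ.isHermitian_inEigenbasis hA).mul_apply_swap_eq_normSq]
  refine sum_congr rfl fun i _ => sum_congr rfl fun j _ => by ring

lemma qVar_eq_ofReal (hΓ : Γ.IsHermitian) (hA : A.IsHermitian) (s : ℝ) :
    qVar Γ A s = ((rpowPairSum hΓ.eigenvalues (fun i j => Complex.normSq (hΓ.inEigenbasis A i j)) s
      - (∑ i, (hΓ.inEigenbasis A i i).re * hΓ.eigenvalues i) ^ 2 : ℝ) : ℂ) := by
  rw [qVar, hΓ.trace_mul_matRpow_mul_mul_matRpow hA, hΓ.trace_mul_eq_sum hA]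
  push_cast
  rfl

end Matrix.IsHermitian

/-- For a positive definite density matrix `Γ` and Hermitian `A`,
`0 ≤ Var^{(s)}_Γ(A) ≤ Var^{(0)}_Γ(A) = Tr[A²Γ] - (Tr[AΓ])²` for all `s ∈ [0,1]`
(inequalities in the complex order, so in particular these quantities are real). -/
theorem qVar_nonneg_and_le_qVar_zero {n : ℕ}
    (Γ A : Matrix (Fin n) (Fin n) ℂ) (hΓ : Γ.PosDef) (hΓtr : Γ.trace = 1)
    (hA : A.IsHermitian) (s : ℝ) (hs : s ∈ Set.Icc (0:ℝ) 1) :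
    0 ≤ qVar Γ A s ∧ qVar Γ A s ≤ (A * A * Γ).trace - ((A * Γ).trace) ^ 2 := by
  have hΓh := hΓ.isHermitian
  have hB := hΓh.isHermitian_inEigenbasis hA
  have hw : 0 ≤ hΓh.eigenvalues := fun i => (hΓ.eigenvalues_pos i).le
  have hb : 0 ≤ fun i j => Complex.normSq (hΓh.inEigenbasis A i j) :=
    fun i j => Complex.normSq_nonneg _
  rw [← hΓh.qVar_zero, hΓh.qVar_eq_ofReal hA, hΓh.qVar_eq_ofReal hA, Complex.zero_le_real,
    Complex.real_le_real, sub_nonneg]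
  refine ⟨sq_sum_mul_le_rpowPairSum hw (hΓh.sum_eigenvalues_eq_one hΓtr) hb
    (fun i => (sq _).trans_le (Complex.re_sq_le_normSq _)) s, ?_⟩
  gcongr
  exact rpowPairSum_le_rpowPairSum_zero hw hb hB.normSq_apply_comm hs
end

section
/- (Relative free energy variational principle.) Let H₀ and W be Hermitian n×n complex matrices, set Γ₀ = exp(−H₀)/Tr[exp(−H₀)] and Γ_W = exp(−(H₀+W))/Tr[exp(−(H₀+W))]. Then for every positive definite n×n density matrix Γ, H(Γ, Γ₀) + Tr[WΓ] ≥ −log( Tr[exp(−(H₀+W))] / Tr[exp(−H₀)] ), with equality if and only if Γ = Γ_W. -/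
/-!
With `Z_H = Tr exp(-H)` and `Γ_H = exp(-H) / Z_H`, the functional calculus gives
`log Γ_H = -H - log Z_H`, so for every density matrix `Γ`
`H(Γ, Γ₀) + Tr[WΓ] = H(Γ, Γ_W) - log (Z_W / Z₀)`,
and the theorem is Klein's inequality `H(ρ, σ) ≥ 0`, with equality iff `ρ = σ`.
For Klein, expand `ρ = ∑ pᵢ |uᵢ⟩⟨uᵢ|` and `σ = ∑ qⱼ |vⱼ⟩⟨vⱼ|`. The overlaps
`Pⱼᵢ = |⟨vⱼ, uᵢ⟩|²` form a doubly stochastic matrix, and since `Tr ρ = Tr σ`,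
`H(ρ, σ) = ∑ᵢⱼ Pⱼᵢ qⱼ φ(pᵢ / qⱼ)` with `φ(x) = x log x + 1 - x ≥ 0`, which vanishes only at `1`.
Equality thus forces `pᵢ = qⱼ` whenever `uᵢ` and `vⱼ` overlap, and then the two spectral
decompositions agree.
-/

open Matrix
open scoped ComplexOrder

/-- Matrix logarithm via the functional calculus. -/
noncomputable def matLog {n : ℕ} (M : Matrix (Fin n) (Fin n) ℂ) :
    Matrix (Fin n) (Fin n) ℂ :=
  matFun Real.log M

/-- The quantum relative entropy `H(Γ, Γ') = Tr[Γ (log Γ - log Γ')]`. -/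
noncomputable def relEnt {n : ℕ} (Γ Γ' : Matrix (Fin n) (Fin n) ℂ) : ℂ :=
  (Γ * (matLog Γ - matLog Γ')).trace

namespace Matrix

lemma nonempty_of_trace_ne_zero {ι R : Type*} [Fintype ι] [AddCommMonoid R] {A : Matrix ι ι R}
    (h : A.trace ≠ 0) : Nonempty ι := by
  contrapose! h
  exact trace_eq_zero_of_isEmpty A

variable {ι : Type*} [Fintype ι] [DecidableEq ι]

lemma IsHermitian.spectral_theorem' {A : Matrix ι ι ℂ} (hA : A.IsHermitian) :
    A = (hA.eigenvectorUnitary : Matrix ι ι ℂ) * diagonal (fun i => (hA.eigenvalues i : ℂ)) *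
      star (hA.eigenvectorUnitary : Matrix ι ι ℂ) := by
  conv_lhs => rw [hA.spectral_theorem, Unitary.conjStarAlgAut_apply]
  rfl

lemma sum_normSq_row_eq_one_of_mem_unitary {B : Matrix ι ι ℂ}
    (hB : B ∈ unitary (Matrix ι ι ℂ)) (j : ι) : ∑ i, Complex.normSq (B j i) = 1 := by
  have h : (B * star B) j j = (1 : Matrix ι ι ℂ) j j := by
    rw [Unitary.mul_star_self_of_mem hB]
  simp only [mul_apply, one_apply_eq, star_apply, RCLike.star_def, Complex.mul_conj] at h
  exact_mod_cast h

lemma sum_normSq_col_eq_one_of_mem_unitary {B : Matrix ι ι ℂ}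
    (hB : B ∈ unitary (Matrix ι ι ℂ)) (i : ι) : ∑ j, Complex.normSq (B j i) = 1 := by
  simpa using sum_normSq_row_eq_one_of_mem_unitary (Unitary.star_mem hB) i

lemma trace_conj_diagonal_mul_conj_diagonal (U V : unitary (Matrix ι ι ℂ)) (d e : ι → ℂ) :
    ((U : Matrix ι ι ℂ) * diagonal d * star (U : Matrix ι ι ℂ) *
        ((V : Matrix ι ι ℂ) * diagonal e * star (V : Matrix ι ι ℂ))).trace =
      ∑ i, ∑ j, d i * e j * Complex.normSq ((star (V : Matrix ι ι ℂ) * U) j i) := by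
  set B := star (V : Matrix ι ι ℂ) * U
  have hcycle : ((U : Matrix ι ι ℂ) * diagonal d * star (U : Matrix ι ι ℂ) *
      ((V : Matrix ι ι ℂ) * diagonal e * star (V : Matrix ι ι ℂ))).trace =
      (diagonal d * star B * diagonal e * B).trace := by
    simp only [B, star_mul, star_star, Matrix.mul_assoc]
    rw [trace_mul_comm]
    simp only [Matrix.mul_assoc]
  rw [hcycle, trace]
  refine Finset.sum_congr rfl fun i _ => Finset.sum_congr rfl fun j _ => ?_
  simp only [mul_diagonal, diagonal_mul, star_apply, RCLike.star_def, ← Complex.mul_conj]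
  ring

/-- `|⟨vⱼ, uᵢ⟩|²` for the eigenbases `u` of `A` and `v` of `B`. -/
noncomputable def IsHermitian.eigenOverlap {A B : Matrix ι ι ℂ} (hA : A.IsHermitian)
    (hB : B.IsHermitian) (j i : ι) : ℝ :=
  Complex.normSq ((star (hB.eigenvectorUnitary : Matrix ι ι ℂ) * hA.eigenvectorUnitary) j i)

lemma IsHermitian.sum_eigenOverlap_row {A B : Matrix ι ι ℂ} (hA : A.IsHermitian)
    (hB : B.IsHermitian) (j : ι) : ∑ i, hA.eigenOverlap hB j i = 1 :=
  sum_normSq_row_eq_one_of_mem_unitary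
    (mul_mem (Unitary.star_mem hB.eigenvectorUnitary.2) hA.eigenvectorUnitary.2) j

lemma IsHermitian.sum_eigenOverlap_col {A B : Matrix ι ι ℂ} (hA : A.IsHermitian)
    (hB : B.IsHermitian) (i : ι) : ∑ j, hA.eigenOverlap hB j i = 1 :=
  sum_normSq_col_eq_one_of_mem_unitary
    (mul_mem (Unitary.star_mem hB.eigenvectorUnitary.2) hA.eigenvectorUnitary.2) i

lemma conj_diagonal_eq_conj_diagonal {U V : unitary (Matrix ι ι ℂ)} {d e : ι → ℂ}
    (h : ∀ i j, (star (V : Matrix ι ι ℂ) * U) j i ≠ 0 → d i = e j) :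
    (U : Matrix ι ι ℂ) * diagonal d * star (U : Matrix ι ι ℂ) =
      V * diagonal e * star (V : Matrix ι ι ℂ) := by
  set B := star (V : Matrix ι ι ℂ) * U
  have hB : B * star B = 1 :=
    Unitary.mul_star_self_of_mem (mul_mem (Unitary.star_mem V.2) U.2)
  have hUB : (U : Matrix ι ι ℂ) = V * B := by
    rw [← Matrix.mul_assoc, Unitary.mul_star_self_of_mem V.2, Matrix.one_mul]
  have hcomm : B * diagonal d = diagonal e * B := by
    ext j i
    rw [mul_diagonal, diagonal_mul]
    by_cases hji : B j i = 0
    · simp [hji]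
    · rw [h i j hji, mul_comm]
  calc (U : Matrix ι ι ℂ) * diagonal d * star (U : Matrix ι ι ℂ)
      = V * (B * diagonal d) * star B * star (V : Matrix ι ι ℂ) := by
        simp only [hUB, star_mul, Matrix.mul_assoc]
    _ = V * diagonal e * (B * star B) * star (V : Matrix ι ι ℂ) := by
        simp only [hcomm, Matrix.mul_assoc]
    _ = V * diagonal e * star (V : Matrix ι ι ℂ) := by
        rw [hB, Matrix.mul_one]

open scoped MatrixOrder Matrix.Norms.L2Operator in
lemma IsHermitian.posDef_exp {H : Matrix ι ι ℂ} (hH : H.IsHermitian) :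
    (NormedSpace.exp H).PosDef :=
  hH.isSelfAdjoint.exp_nonneg.posSemidef.posDef_iff_isUnit.mpr (isUnit_exp H)

end Matrix

section KLFun

open Real InformationTheory

lemma mul_klFun_div {a b : ℝ} (ha : 0 < a) (hb : 0 < b) :
    b * klFun (a / b) = a * (log a - log b) + b - a := by
  rw [klFun_apply, log_div ha.ne' hb.ne']
  field_simp

lemma mul_klFun_div_nonneg {a b : ℝ} (ha : 0 ≤ a) (hb : 0 ≤ b) : 0 ≤ b * klFun (a / b) :=
  mul_nonneg hb (klFun_nonneg (div_nonneg ha hb))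

lemma mul_klFun_div_eq_zero_iff {a b : ℝ} (ha : 0 ≤ a) (hb : 0 < b) :
    b * klFun (a / b) = 0 ↔ a = b := by
  rw [mul_eq_zero_iff_left hb.ne', klFun_eq_zero_iff (div_nonneg ha hb.le),
    div_eq_one_iff_eq hb.ne']

lemma sum_mul_log_sub_eq_sum_klFun {ι : Type*} [Fintype ι] {P : ι → ι → ℝ}
    (hrow : ∀ j, ∑ i, P j i = 1) (hcol : ∀ i, ∑ j, P j i = 1) {p q : ι → ℝ}
    (hp : ∀ i, 0 < p i) (hq : ∀ j, 0 < q j) (hpq : ∑ i, p i = ∑ j, q j) :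
    ∑ i, p i * log (p i) - ∑ i, ∑ j, p i * log (q j) * P j i =
      ∑ i, ∑ j, P j i * (q j * klFun (p i / q j)) := by
  have hp' : ∑ i, ∑ j, P j i * p i = ∑ i, p i := by
    simp_rw [← Finset.sum_mul, hcol, one_mul]
  have hq' : ∑ i, ∑ j, P j i * q j = ∑ j, q j := by
    rw [Finset.sum_comm]
    simp_rw [← Finset.sum_mul, hrow, one_mul]
  have hplogp : ∑ i, ∑ j, P j i * (p i * log (p i)) = ∑ i, p i * log (p i) := by
    simp_rw [← Finset.sum_mul, hcol, one_mul]
  have hterm : ∀ i j, P j i * (q j * klFun (p i / q j)) =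
      P j i * (p i * log (p i)) - p i * log (q j) * P j i + P j i * q j - P j i * p i := by
    intro i j
    rw [mul_klFun_div (hp i) (hq j)]
    ring
  simp only [hterm, Finset.sum_add_distrib, Finset.sum_sub_distrib]
  rw [hplogp, hq', hp', hpq]
  ring

end KLFun

lemma Complex.log_div_of_pos {a b : ℂ} (ha : 0 < a) (hb : 0 < b) :
    Complex.log (a / b) = Complex.log a - Complex.log b := by
  obtain ⟨x, hx, rfl⟩ : ∃ x : ℝ, 0 < x ∧ (x : ℂ) = a := RCLike.pos_iff_exists_ofReal.mp ha
  obtain ⟨y, hy, rfl⟩ : ∃ y : ℝ, 0 < y ∧ (y : ℂ) = b := RCLike.pos_iff_exists_ofReal.mp hb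
  rw [← Complex.ofReal_div, ← Complex.ofReal_log (div_pos hx hy).le, Real.log_div hx.ne' hy.ne',
    Complex.ofReal_sub, Complex.ofReal_log hx.le, Complex.ofReal_log hy.le]

section Klein

open Real InformationTheory

variable {n : ℕ} {ρ σ : Matrix (Fin n) (Fin n) ℂ}

lemma matLog_of_isHermitian (hρ : ρ.IsHermitian) :
    matLog ρ = (hρ.eigenvectorUnitary : Matrix (Fin n) (Fin n) ℂ) *
      diagonal (fun i => (log (hρ.eigenvalues i) : ℂ)) *
      star (hρ.eigenvectorUnitary : Matrix (Fin n) (Fin n) ℂ) := by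
  rw [matLog, matFun, dif_pos hρ]

lemma relEnt_eq_sum (hρ : ρ.IsHermitian) (hσ : σ.IsHermitian) :
    relEnt ρ σ = ((∑ i, hρ.eigenvalues i * log (hρ.eigenvalues i) -
      ∑ i, ∑ j, hρ.eigenvalues i * log (hσ.eigenvalues j) * hρ.eigenOverlap hσ j i : ℝ) : ℂ) := by
  have hself : (ρ * matLog ρ).trace = ∑ i, (hρ.eigenvalues i * log (hρ.eigenvalues i) : ℝ) := by
    rw [matLog_of_isHermitian hρ]
    nth_rw 1 [hρ.spectral_theorem']
    rw [trace_conj_diagonal_mul_conj_diagonal, Unitary.coe_star_mul_self]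
    simp [one_apply, apply_ite Complex.ofReal]
  have hcross : (ρ * matLog σ).trace = ∑ i, ∑ j,
      (hρ.eigenvalues i * log (hσ.eigenvalues j) * hρ.eigenOverlap hσ j i : ℝ) := by
    rw [matLog_of_isHermitian hσ]
    nth_rw 1 [hρ.spectral_theorem']
    rw [trace_conj_diagonal_mul_conj_diagonal]
    simp [IsHermitian.eigenOverlap]
  rw [relEnt, Matrix.mul_sub, trace_sub, hself, hcross]
  push_cast
  rfl

lemma relEnt_eq_sum_klFun (hρ : ρ.PosDef) (hσ : σ.PosDef) (htr : ρ.trace = σ.trace) :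
    relEnt ρ σ = ((∑ i, ∑ j, hρ.1.eigenOverlap hσ.1 j i *
      (hσ.1.eigenvalues j * klFun (hρ.1.eigenvalues i / hσ.1.eigenvalues j)) : ℝ) : ℂ) := by
  have hsum : ∑ i, hρ.1.eigenvalues i = ∑ j, hσ.1.eigenvalues j := by
    rw [hρ.1.trace_eq_sum_eigenvalues, hσ.1.trace_eq_sum_eigenvalues] at htr
    exact_mod_cast htr
  rw [relEnt_eq_sum hρ.1 hσ.1, sum_mul_log_sub_eq_sum_klFun (hρ.1.sum_eigenOverlap_row hσ.1)
    (hρ.1.sum_eigenOverlap_col hσ.1) hρ.eigenvalues_pos hσ.eigenvalues_pos hsum]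

lemma eigenOverlap_mul_klFun_nonneg (hρ : ρ.PosDef) (hσ : σ.PosDef) (i j : Fin n) :
    0 ≤ hρ.1.eigenOverlap hσ.1 j i *
      (hσ.1.eigenvalues j * klFun (hρ.1.eigenvalues i / hσ.1.eigenvalues j)) :=
  mul_nonneg (Complex.normSq_nonneg _)
    (mul_klFun_div_nonneg (hρ.eigenvalues_pos i).le (hσ.eigenvalues_pos j).le)

lemma relEnt_nonneg (hρ : ρ.PosDef) (hσ : σ.PosDef) (htr : ρ.trace = σ.trace) :
    0 ≤ relEnt ρ σ := by
  rw [relEnt_eq_sum_klFun hρ hσ htr, Complex.zero_le_real]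
  exact Finset.sum_nonneg fun i _ => Finset.sum_nonneg fun j _ =>
    eigenOverlap_mul_klFun_nonneg hρ hσ i j

lemma relEnt_eq_zero_iff (hρ : ρ.PosDef) (hσ : σ.PosDef) (htr : ρ.trace = σ.trace) :
    relEnt ρ σ = 0 ↔ ρ = σ := by
  refine ⟨fun h => ?_, fun h => by rw [h, relEnt, sub_self, Matrix.mul_zero, trace_zero]⟩
  have hnonneg := eigenOverlap_mul_klFun_nonneg hρ hσ
  rw [relEnt_eq_sum_klFun hρ hσ htr, Complex.ofReal_eq_zero,
    Finset.sum_eq_zero_iff_of_nonneg fun i _ => Finset.sum_nonneg fun j _ => hnonneg i j] at h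
  have hzero : ∀ i j, hρ.1.eigenOverlap hσ.1 j i *
      (hσ.1.eigenvalues j * klFun (hρ.1.eigenvalues i / hσ.1.eigenvalues j)) = 0 := fun i j =>
    (Finset.sum_eq_zero_iff_of_nonneg fun j _ => hnonneg i j).mp (h i (Finset.mem_univ i)) j
      (Finset.mem_univ j)
  rw [hρ.1.spectral_theorem', hσ.1.spectral_theorem']
  refine conj_diagonal_eq_conj_diagonal fun i j hji => ?_
  have hoverlap : hρ.1.eigenOverlap hσ.1 j i ≠ 0 := Complex.normSq_eq_zero.not.mpr hji
  rw [(mul_klFun_div_eq_zero_iff (hρ.eigenvalues_pos i).le (hσ.eigenvalues_pos j)).mp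
    ((mul_eq_zero_iff_left hoverlap).mp (hzero i j))]

end Klein

noncomputable def gibbsState {ι : Type*} [Fintype ι] [DecidableEq ι] (H : Matrix ι ι ℂ) :
    Matrix ι ι ℂ :=
  (NormedSpace.exp (-H)).trace⁻¹ • NormedSpace.exp (-H)

section Gibbs

open scoped MatrixOrder Matrix.Norms.L2Operator

variable {ι : Type*} [Fintype ι] [DecidableEq ι] [Nonempty ι] {H : Matrix ι ι ℂ}

lemma trace_exp_pos (hH : H.IsHermitian) : 0 < (NormedSpace.exp H).trace :=
  hH.posDef_exp.trace_pos

lemma posDef_gibbsState (hH : H.IsHermitian) : (gibbsState H).PosDef :=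
  hH.neg.posDef_exp.smul (inv_pos.mpr (trace_exp_pos hH.neg))

lemma trace_gibbsState (hH : H.IsHermitian) : (gibbsState H).trace = 1 := by
  rw [gibbsState, trace_smul, smul_eq_mul, inv_mul_cancel₀ (trace_exp_pos hH.neg).ne']

lemma log_gibbsState (hH : H.IsHermitian) :
    CFC.log (gibbsState H) = -H - Complex.log (NormedSpace.exp (-H)).trace • 1 := by
  obtain ⟨z, hz, hZ⟩ : ∃ z : ℝ, 0 < z ∧ (z : ℂ) = (NormedSpace.exp (-H)).trace :=
    RCLike.pos_iff_exists_ofReal.mp (trace_exp_pos hH.neg)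
  rw [gibbsState, ← hZ, ← Complex.ofReal_inv, ← Complex.ofReal_log hz.le,
    Complex.coe_smul, Complex.coe_smul,
    CFC.log_smul' _ (inv_pos.mpr hz) hH.neg.posDef_exp.isStrictlyPositive,
    CFC.log_exp _ hH.neg.isSelfAdjoint, Real.log_inv, Algebra.algebraMap_eq_smul_one, neg_smul,
    neg_add_eq_sub]

lemma matLog_eq_log {n : ℕ} {A : Matrix (Fin n) (Fin n) ℂ} (hA : A.IsHermitian) :
    matLog A = CFC.log A := by
  rw [matLog, matFun, dif_pos hA, CFC.log, hA.cfc_eq, IsHermitian.cfc,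
    Unitary.conjStarAlgAut_apply]
  rfl

lemma relEnt_gibbsState {n : ℕ} {Γ H : Matrix (Fin n) (Fin n) ℂ} (hΓ : Γ.trace = 1)
    (hH : H.IsHermitian) :
    relEnt Γ (gibbsState H) =
      (Γ * matLog Γ).trace + (Γ * H).trace + Complex.log (NormedSpace.exp (-H)).trace := by
  have := nonempty_of_trace_ne_zero (hΓ ▸ one_ne_zero)
  rw [relEnt, matLog_eq_log (posDef_gibbsState hH).1, log_gibbsState hH]
  simp only [Matrix.mul_sub, Matrix.mul_neg, Matrix.mul_smul, trace_sub, trace_neg, trace_smul,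
    hΓ, smul_eq_mul, mul_one]
  ring

end Gibbs

/-- **Relative free energy variational principle.**  With `Γ₀ = exp(-H₀)/Tr[exp(-H₀)]` and
`Γ_W = exp(-(H₀+W))/Tr[exp(-(H₀+W))]`, every positive definite density matrix `Γ` satisfies
`H(Γ,Γ₀) + Tr[WΓ] ≥ -log(Tr[exp(-(H₀+W))]/Tr[exp(-H₀)])`, with equality iff `Γ = Γ_W`. -/
theorem relative_free_energy_variational_principle {n : ℕ}
    (H₀ W : Matrix (Fin n) (Fin n) ℂ) (hH₀ : H₀.IsHermitian) (hW : W.IsHermitian)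
    (Γ₀ ΓW : Matrix (Fin n) (Fin n) ℂ)
    (hΓ₀ : Γ₀ = ((NormedSpace.exp (-H₀)).trace)⁻¹ • NormedSpace.exp (-H₀))
    (hΓW : ΓW = ((NormedSpace.exp (-(H₀ + W))).trace)⁻¹ • NormedSpace.exp (-(H₀ + W)))
    (Γ : Matrix (Fin n) (Fin n) ℂ) (hΓ : Γ.PosDef) (hΓtr : Γ.trace = 1) :
    -(Complex.log ((NormedSpace.exp (-(H₀ + W))).trace / (NormedSpace.exp (-H₀)).trace)) ≤
        relEnt Γ Γ₀ + (W * Γ).trace ∧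
      (relEnt Γ Γ₀ + (W * Γ).trace =
          -(Complex.log
            ((NormedSpace.exp (-(H₀ + W))).trace / (NormedSpace.exp (-H₀)).trace)) ↔
        Γ = ΓW) := by
  have := nonempty_of_trace_ne_zero (hΓtr ▸ one_ne_zero)
  replace hΓ₀ : Γ₀ = gibbsState H₀ := hΓ₀
  replace hΓW : ΓW = gibbsState (H₀ + W) := hΓW
  have hHW := hH₀.add hW
  have hshift : relEnt Γ Γ₀ + (W * Γ).trace = relEnt Γ ΓW +
      -Complex.log ((NormedSpace.exp (-(H₀ + W))).trace / (NormedSpace.exp (-H₀)).trace) := by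
    rw [hΓ₀, hΓW, relEnt_gibbsState hΓtr hH₀, relEnt_gibbsState hΓtr hHW,
      Complex.log_div_of_pos (trace_exp_pos hHW.neg) (trace_exp_pos hH₀.neg), Matrix.mul_add,
      trace_add, trace_mul_comm W]
    ring
  have htr : Γ.trace = ΓW.trace := by rw [hΓtr, hΓW, trace_gibbsState hHW]
  have hΓWpos : ΓW.PosDef := hΓW ▸ posDef_gibbsState hHW
  rw [hshift]
  exact ⟨le_add_of_nonneg_left (relEnt_nonneg hΓ hΓWpos htr),
    add_eq_right.trans (relEnt_eq_zero_iff hΓ hΓWpos htr)⟩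
end

section
/- (Density of the 2D free Bose gas.) Fix κ > 0 and for T > 0 set N₀(T) := Σ_{k ∈ (2πℤ)²} 1/(e^{(|k|²+κ)/T} − 1), where |k|² = k₁² + k₂². Then N₀(T)/(T log T) → 1/(4π) as T → ∞. In particular the renormalized chemical potential λ ŵ(0) N₀ with λ = T^{−1} is proportional to log T in dimension 2. -/
/-!
Expanding every Bose factor `(e^x - 1)⁻¹ = Σ_{n ≥ 1} e^{-n x}` and summing over the lattice first
gives `N₀(T) = Σ_{n ≥ 1} e^{-nκ/T} θ(4π²n/T)²` with `θ(b) = Σ_{j ∈ ℤ} e^{-b j²}`. Poisson summation,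
`θ(b) = √(π/b) θ(π²/b)`, squeezes `θ(b)²` between `π/b` and `π/b + 2 + b`. The term `π/b` sums to
`(T/4π) (-log (1 - e^{-κ/T})) = (T/4π) (log T + O(1))`, the rest to `O(T)`, so
`N₀(T) = (T/4π) log T + O(T)`.
-/

open Filter Real Topology Asymptotics

lemma hasSum_pow_succ_of_lt_one {r : ℝ} (h₀ : 0 ≤ r) (h₁ : r < 1) :
    HasSum (fun n : ℕ => r ^ (n + 1)) (r / (1 - r)) := by
  simpa only [pow_succ', div_eq_mul_inv] using (hasSum_geometric_of_lt_one h₀ h₁).mul_left r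

lemma hasSum_succ_mul_pow_succ {r : ℝ} (h₀ : 0 ≤ r) (h₁ : r < 1) :
    HasSum (fun n : ℕ => ((n : ℝ) + 1) * r ^ (n + 1)) (r / (1 - r) ^ 2) := by
  have h := hasSum_coe_mul_geometric_of_norm_lt_one (by rwa [norm_of_nonneg h₀])
  simpa using (hasSum_nat_add_iff' 1).2 h

lemma hasSum_pow_natAbs {r : ℝ} (h₀ : 0 ≤ r) (h₁ : r < 1) :
    HasSum (fun n : ℤ => r ^ n.natAbs) ((1 - r)⁻¹ + r / (1 - r)) :=
  .of_nat_of_neg_add_one (by simpa using hasSum_geometric_of_lt_one h₀ h₁)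
    (by simpa only [Int.natAbs_neg, ← Nat.cast_succ, Int.natAbs_natCast] using
      hasSum_pow_succ_of_lt_one h₀ h₁)

lemma exp_neg_div_one_sub_exp_neg {x : ℝ} (hx : x ≠ 0) :
    rexp (-x) / (1 - rexp (-x)) = (rexp x - 1)⁻¹ := by
  have : rexp x - 1 ≠ 0 := by simpa [sub_eq_zero] using hx
  rw [exp_neg]
  field_simp

lemma exp_neg_div_one_sub_exp_neg_le {x : ℝ} (hx : 0 < x) :
    rexp (-x) / (1 - rexp (-x)) ≤ x⁻¹ := by
  rw [exp_neg_div_one_sub_exp_neg hx.ne']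
  exact inv_anti₀ hx (by linarith [add_one_le_exp x])

lemma exp_neg_div_one_sub_exp_neg_sq_le {x : ℝ} (hx : 0 < x) :
    rexp (-x) / (1 - rexp (-x)) ^ 2 ≤ x⁻¹ * (1 + x⁻¹) := by
  have hr : rexp (-x) < 1 := exp_lt_one_iff.2 (by linarith)
  have hsplit : rexp (-x) / (1 - rexp (-x)) ^ 2
      = rexp (-x) / (1 - rexp (-x)) * (1 + rexp (-x) / (1 - rexp (-x))) := by
    field_simp [(sub_pos.2 hr).ne']
    ring
  rw [hsplit]
  gcongr <;> exact exp_neg_div_one_sub_exp_neg_le hx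

lemma neg_log_le_neg_log_one_sub_exp_neg {x : ℝ} (hx : 0 < x) :
    -log x ≤ -log (1 - rexp (-x)) := by
  have hr : rexp (-x) < 1 := exp_lt_one_iff.2 (by linarith)
  gcongr
  linarith [add_one_le_exp (-x)]

lemma neg_log_one_sub_exp_neg_le {x : ℝ} (hx : 0 < x) :
    -log (1 - rexp (-x)) ≤ -log x + x := by
  have h : x * rexp (-x) ≤ 1 - rexp (-x) := by
    have hprod : rexp x * rexp (-x) = 1 := by rw [← exp_add, add_neg_cancel, exp_zero]
    nlinarith [add_one_le_exp x, exp_pos (-x)]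
  have := log_le_log (by positivity) h
  rw [log_mul hx.ne' (exp_pos _).ne', log_exp] at this
  linarith

lemma hasSum_inv_exp_sub_one {x : ℝ} (hx : 0 < x) :
    HasSum (fun n : ℕ => rexp (-x) ^ (n + 1)) (rexp x - 1)⁻¹ := by
  rw [← exp_neg_div_one_sub_exp_neg hx.ne']
  exact hasSum_pow_succ_of_lt_one (exp_pos _).le (exp_lt_one_iff.2 (by linarith))

lemma hasSum_tsum_inv_exp_add_sub_one {ι : Type*} {a : ι → ℝ} {c : ℝ} (ha : ∀ i, 0 ≤ a i)
    (hc : 0 < c) (hs : Summable fun i => rexp (-a i)) :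
    HasSum (fun n : ℕ => rexp (-c) ^ (n + 1) * ∑' i, rexp (-a i) ^ (n + 1))
      (∑' i, (rexp (a i + c) - 1)⁻¹) := by
  set F : ι × ℕ → ℝ := fun p => rexp (-a p.1) ^ (p.2 + 1) * rexp (-c) ^ (p.2 + 1)
  have hpow_le : ∀ i (n : ℕ), rexp (-a i) ^ (n + 1) ≤ rexp (-a i) := fun i n =>
    pow_le_of_le_one (exp_pos _).le (exp_le_one_iff.2 (by linarith [ha i])) n.succ_ne_zero
  have hF : Summable F := by
    refine .of_nonneg_of_le (fun p => by positivity) (fun p => ?_)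
      (hs.mul_of_nonneg (hasSum_inv_exp_sub_one hc).summable (fun i => (exp_pos _).le)
        (fun n => by positivity))
    exact mul_le_mul_of_nonneg_right (hpow_le p.1 p.2) (by positivity)
  have hrow : ∀ i, HasSum (fun n => F (i, n)) (rexp (a i + c) - 1)⁻¹ := fun i => by
    simpa only [F, ← mul_pow, ← exp_add, neg_add] using
      hasSum_inv_exp_sub_one (add_pos_of_nonneg_of_pos (ha i) hc)
  have hcol : ∀ n : ℕ, HasSum (fun i => F (i, n))
      (rexp (-c) ^ (n + 1) * ∑' i, rexp (-a i) ^ (n + 1)) := fun n => by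
    rw [mul_comm]
    refine (Summable.hasSum ?_).mul_right _
    exact .of_nonneg_of_le (fun i => by positivity) (fun i => hpow_le i n) hs
  rw [(hF.hasSum.prod_fiberwise hrow).tsum_eq]
  exact ((Equiv.prodComm ℕ ι).hasSum_iff.2 hF.hasSum).prod_fiberwise hcol

noncomputable def realTheta (b : ℝ) : ℝ := ∑' n : ℤ, rexp (-b * n ^ 2)

lemma exp_neg_mul_sq_le_pow_natAbs {b : ℝ} (hb : 0 ≤ b) (n : ℤ) :
    rexp (-b * n ^ 2) ≤ rexp (-b) ^ n.natAbs := by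
  rw [← exp_nat_mul, exp_le_exp, Nat.cast_natAbs, ← sq_abs (n : ℝ), Int.cast_abs]
  have h : |(n : ℝ)| ≤ |(n : ℝ)| ^ 2 := by
    rcases eq_or_ne n 0 with rfl | hn
    · simp
    · nlinarith [show (1 : ℝ) ≤ |(n : ℝ)| by exact_mod_cast Int.one_le_abs hn]
  nlinarith

lemma summable_exp_neg_mul_int_sq {b : ℝ} (hb : 0 < b) :
    Summable fun n : ℤ => rexp (-b * n ^ 2) :=
  .of_nonneg_of_le (fun _ => (exp_pos _).le) (exp_neg_mul_sq_le_pow_natAbs hb.le)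
    (hasSum_pow_natAbs (exp_pos _).le (exp_lt_one_iff.2 (by linarith))).summable

lemma one_le_realTheta {b : ℝ} (hb : 0 < b) : 1 ≤ realTheta b := by
  simpa [realTheta] using (summable_exp_neg_mul_int_sq hb).le_tsum 0 (fun _ _ => (exp_pos _).le)

lemma realTheta_le {b : ℝ} (hb : 0 < b) : realTheta b ≤ 1 + 2 * b⁻¹ := by
  have hr : rexp (-b) < 1 := exp_lt_one_iff.2 (by linarith)
  calc realTheta b ≤ (1 - rexp (-b))⁻¹ + rexp (-b) / (1 - rexp (-b)) :=
        hasSum_le (exp_neg_mul_sq_le_pow_natAbs hb.le)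
          (summable_exp_neg_mul_int_sq hb).hasSum (hasSum_pow_natAbs (exp_pos _).le hr)
    _ = 1 + 2 * (rexp (-b) / (1 - rexp (-b))) := by
        field_simp [(sub_pos.2 hr).ne']
        ring
    _ ≤ 1 + 2 * b⁻¹ := by grw [exp_neg_div_one_sub_exp_neg_le hb]

lemma realTheta_eq_sqrt_mul_realTheta {b : ℝ} (hb : 0 < b) :
    realTheta b = √(π / b) * realTheta (π ^ 2 / b) := by
  have h := tsum_exp_neg_mul_int_sq (div_pos hb pi_pos)
  have e₁ : -π * (b / π) = -b := by field_simp
  have e₂ : -π / (b / π) = -(π ^ 2 / b) := by field_simp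
  have e₃ : (1 : ℝ) / (b / π) ^ (1 / 2 : ℝ) = √(π / b) := by
    rw [← sqrt_eq_rpow, one_div, ← sqrt_inv, inv_div]
  rw [e₁, e₂, e₃] at h
  exact h

lemma div_le_realTheta_sq {b : ℝ} (hb : 0 < b) : π / b ≤ realTheta b ^ 2 := by
  rw [realTheta_eq_sqrt_mul_realTheta hb, mul_pow, sq_sqrt (by positivity)]
  exact le_mul_of_one_le_right (by positivity)
    (one_le_pow₀ (one_le_realTheta (by positivity)))

lemma realTheta_sq_le {b : ℝ} (hb : 0 < b) : realTheta b ^ 2 ≤ π / b + 2 + b := by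
  have hc : 0 < π ^ 2 / b := by positivity
  rw [realTheta_eq_sqrt_mul_realTheta hb, mul_pow, sq_sqrt (by positivity)]
  calc π / b * realTheta (π ^ 2 / b) ^ 2 ≤ π / b * (1 + 2 * (π ^ 2 / b)⁻¹) ^ 2 := by
        gcongr
        · exact zero_le_one.trans (one_le_realTheta hc)
        · exact realTheta_le hc
    _ = π / b + 4 / π + 4 / π ^ 3 * b := by
        field_simp
        ring
    _ ≤ π / b + 2 + b := by
        have h4 : 4 / π ≤ 2 := by rw [div_le_iff₀ pi_pos]; linarith [pi_gt_three]
        have h5 : 4 / π ^ 3 ≤ 1 := by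
          rw [div_le_one (by positivity)]; nlinarith [pi_gt_three]
        nlinarith

lemma hasSum_exp_neg_mul_sq_add_sq {b : ℝ} (hb : 0 < b) :
    HasSum (fun k : ℤ × ℤ => rexp (-b * (k.1 ^ 2 + k.2 ^ 2))) (realTheta b ^ 2) := by
  have hs := summable_exp_neg_mul_int_sq hb
  rw [sq, realTheta]
  simpa only [mul_add, exp_add] using hs.hasSum.mul hs.hasSum
    (hs.mul_of_nonneg hs (fun _ => (exp_pos _).le) (fun _ => (exp_pos _).le))

section ThetaSeries

variable {r b S : ℝ}

lemma div_mul_neg_log_le_of_hasSum (h₀ : 0 ≤ r) (h₁ : r < 1) (hb : 0 < b)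
    (hS : HasSum (fun n : ℕ => r ^ (n + 1) * realTheta (b * (n + 1)) ^ 2) S) :
    π / b * -log (1 - r) ≤ S := by
  have hlog := (hasSum_pow_div_log_of_abs_lt_one (abs_lt.2 ⟨by linarith, h₁⟩)).mul_left (π / b)
  refine hasSum_le (fun n => ?_) hlog hS
  calc π / b * (r ^ (n + 1) / (n + 1)) = r ^ (n + 1) * (π / (b * (n + 1))) := by
        field_simp
    _ ≤ r ^ (n + 1) * realTheta (b * (n + 1)) ^ 2 := by
        gcongr
        exact div_le_realTheta_sq (by positivity)

lemma le_div_mul_neg_log_add_of_hasSum (h₀ : 0 ≤ r) (h₁ : r < 1) (hb : 0 < b)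
    (hS : HasSum (fun n : ℕ => r ^ (n + 1) * realTheta (b * (n + 1)) ^ 2) S) :
    S ≤ π / b * -log (1 - r) + 2 * (r / (1 - r)) + b * (r / (1 - r) ^ 2) := by
  have hlog := (hasSum_pow_div_log_of_abs_lt_one (abs_lt.2 ⟨by linarith, h₁⟩)).mul_left (π / b)
  have hgeom := (hasSum_pow_succ_of_lt_one h₀ h₁).mul_left 2
  have harith := (hasSum_succ_mul_pow_succ h₀ h₁).mul_left b
  refine hasSum_le (fun n => ?_) hS ((hlog.add hgeom).add harith)
  calc r ^ (n + 1) * realTheta (b * (n + 1)) ^ 2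
      ≤ r ^ (n + 1) * (π / (b * (n + 1)) + 2 + b * (n + 1)) := by
        gcongr
        exact realTheta_sq_le (by positivity)
    _ = _ := by field_simp

end ThetaSeries

noncomputable def boseDensity (κ T : ℝ) : ℝ :=
  ∑' k : ℤ × ℤ, (rexp ((((2 * π * k.1) ^ 2 + (2 * π * k.2) ^ 2) + κ) / T) - 1)⁻¹

lemma hasSum_boseDensity {κ T : ℝ} (hκ : 0 < κ) (hT : 0 < T) :
    HasSum (fun n : ℕ => rexp (-(κ / T)) ^ (n + 1) * realTheta (4 * π ^ 2 / T * (n + 1)) ^ 2)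
      (boseDensity κ T) := by
  have hb : 0 < 4 * π ^ 2 / T := by positivity
  convert hasSum_tsum_inv_exp_add_sub_one
    (a := fun k : ℤ × ℤ => 4 * π ^ 2 / T * (k.1 ^ 2 + k.2 ^ 2)) (fun k => by positivity)
    (div_pos hκ hT)
    (by simpa only [neg_mul] using (hasSum_exp_neg_mul_sq_add_sq hb).summable) using 1
  · ext n
    rw [← (hasSum_exp_neg_mul_sq_add_sq (by positivity)).tsum_eq]
    congr 2
    ext k
    rw [← exp_nat_mul]
    congr 1
    push_cast
    ring
  · rw [boseDensity]
    congr 1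
    ext k
    congr 3
    ring

lemma boseDensity_bounds {κ T : ℝ} (hκ : 0 < κ) (hT : 0 < T) :
    T / (4 * π) * (log T - log κ) ≤ boseDensity κ T ∧
      boseDensity κ T ≤ T / (4 * π) * (log T - log κ) + κ / (4 * π) + 2 * T / κ
        + 4 * π ^ 2 / κ * (1 + T / κ) := by
  have hu : 0 < κ / T := div_pos hκ hT
  have hb : 0 < 4 * π ^ 2 / T := by positivity
  have hr₁ : rexp (-(κ / T)) < 1 := exp_lt_one_iff.2 (by linarith)
  have hS := hasSum_boseDensity hκ hT
  have hπb : π / (4 * π ^ 2 / T) = T / (4 * π) := by field_simp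
  have hlog : -log (κ / T) = log T - log κ := by rw [log_div hκ.ne' hT.ne']; ring
  constructor
  · calc T / (4 * π) * (log T - log κ) = π / (4 * π ^ 2 / T) * -log (κ / T) := by
          rw [hπb, hlog]
      _ ≤ π / (4 * π ^ 2 / T) * -log (1 - rexp (-(κ / T))) :=
          mul_le_mul_of_nonneg_left (neg_log_le_neg_log_one_sub_exp_neg hu) (by positivity)
      _ ≤ boseDensity κ T := div_mul_neg_log_le_of_hasSum (exp_pos _).le hr₁ hb hS
  · calc boseDensity κ T
        ≤ π / (4 * π ^ 2 / T) * -log (1 - rexp (-(κ / T)))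
          + 2 * (rexp (-(κ / T)) / (1 - rexp (-(κ / T))))
          + 4 * π ^ 2 / T * (rexp (-(κ / T)) / (1 - rexp (-(κ / T))) ^ 2) :=
          le_div_mul_neg_log_add_of_hasSum (exp_pos _).le hr₁ hb hS
      _ ≤ π / (4 * π ^ 2 / T) * (-log (κ / T) + κ / T) + 2 * (κ / T)⁻¹
          + 4 * π ^ 2 / T * ((κ / T)⁻¹ * (1 + (κ / T)⁻¹)) := by
          gcongr
          · exact neg_log_one_sub_exp_neg_le hu
          · exact exp_neg_div_one_sub_exp_neg_le hu
          · exact exp_neg_div_one_sub_exp_neg_sq_le hu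
      _ = _ := by
          rw [hπb, hlog, inv_div]
          field_simp

lemma isBigO_boseDensity_sub_mul_log {κ : ℝ} (hκ : 0 < κ) :
    (fun T => boseDensity κ T - T / (4 * π) * log T) =O[atTop] fun T => T := by
  refine .of_bound (|log κ| / (4 * π) + κ / (4 * π) + 2 / κ + 4 * π ^ 2 / κ
    + 4 * π ^ 2 / κ ^ 2) ?_
  filter_upwards [eventually_ge_atTop 1] with T hT
  obtain ⟨hlo, hhi⟩ := boseDensity_bounds hκ (by linarith)
  have hlogκ : |T / (4 * π) * log κ| ≤ |log κ| / (4 * π) * T := by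
    rw [abs_mul, abs_of_nonneg (by positivity)]
    exact le_of_eq (by ring)
  have hconst : κ / (4 * π) + 4 * π ^ 2 / κ ≤ (κ / (4 * π) + 4 * π ^ 2 / κ) * T :=
    le_mul_of_one_le_right (by positivity) hT
  have hlin : 2 * T / κ + 4 * π ^ 2 / κ * (T / κ) = (2 / κ + 4 * π ^ 2 / κ ^ 2) * T := by
    field_simp
  rw [norm_eq_abs, norm_of_nonneg (by linarith : (0 : ℝ) ≤ T), abs_le]
  have := abs_le.1 hlogκ
  constructor <;> nlinarith

/-- **Density of the 2D free Bose gas.**  With `N₀(T) = Σ_{k ∈ (2πℤ)²} (e^{(|k|²+κ)/T} - 1)⁻¹`,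
one has `N₀(T)/(T log T) → 1/(4π)` as `T → ∞`; in particular the renormalized chemical
potential `T⁻¹ ŵ(0) N₀` is proportional to `log T` in dimension 2. -/
theorem free_bose_gas_density_2D (κ : ℝ) (hκ : 0 < κ) (N₀ : ℝ → ℝ)
    (hN₀ : ∀ T : ℝ, N₀ T =
      ∑' k : ℤ × ℤ,
        (Real.exp ((((2 * π * k.1) ^ 2 + (2 * π * k.2) ^ 2) + κ) / T) - 1)⁻¹) :
    Tendsto (fun T : ℝ => N₀ T / (T * Real.log T)) atTop (nhds (1 / (4 * π))) := by
  have hT_isLittleO : (fun T : ℝ => T) =o[atTop] fun T => T * log T := by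
    simpa using (isBigO_refl (fun T : ℝ => T) atTop).mul_isLittleO
      (isLittleO_const_log_atTop (c := 1))
  have hD := ((isBigO_boseDensity_sub_mul_log hκ).trans_isLittleO
    hT_isLittleO).tendsto_div_nhds_zero
  rw [show N₀ = boseDensity κ from funext hN₀, ← zero_add (1 / (4 * π))]
  refine (hD.add_const _).congr' ?_
  filter_upwards [eventually_gt_atTop 1] with T hT
  have hlog : log T ≠ 0 := (log_pos hT).ne'
  field_simp
  ring
end

section
/- (Derivative of the partition function.) Let A and B be arbitrary n×n complex matrices. Then for every t ∈ ℝ, the map ε ↦ Tr[exp(A + εB)] is differentiable at t with derivative Tr[B exp(A + tB)]. -/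
/-! By cyclicity of the trace, `d/dε Tr[(A + εB)^(k+1)] = (k+1) Tr[B (A + εB)^k]`, so
differentiating the exponential series term by term (the terms are uniformly bounded by a
summable sequence for `ε` in a ball) turns the series of `Tr[exp(A + εB)]` into the series of
`Tr[B exp(A + εB)]`. -/

open NormedSpace Finset
open scoped Nat

theorem norm_mul_pow_le_mul_norm_pow {R : Type*} [SeminormedRing R] (B X : R) (k : ℕ) :
    ‖B * X ^ k‖ ≤ ‖B‖ * ‖X‖ ^ k := by
  rcases Nat.eq_zero_or_pos k with rfl | hk
  · simp
  · exact (norm_mul_le _ _).trans (mul_le_mul_of_nonneg_left (norm_pow_le' X hk) (norm_nonneg B))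

section CyclicFunctional

variable {𝕂 𝔸 : Type*} [RCLike 𝕂] [NormedRing 𝔸] [NormedAlgebra 𝕂 𝔸]

theorem ContinuousLinearMap.map_exp_eq_tsum [CompleteSpace 𝔸] (τ : 𝔸 →L[𝕂] 𝕂) (X : 𝔸) :
    τ (exp X) = ∑' k, (k ! : 𝕂)⁻¹ * τ (X ^ k) := by
  rw [exp_eq_tsum 𝕂, τ.map_tsum (expSeries_summable' X)]
  simp only [map_smul, smul_eq_mul]

theorem ContinuousLinearMap.summable_inv_factorial_mul_map_pow [CompleteSpace 𝔸]
    (τ : 𝔸 →L[𝕂] 𝕂) (X : 𝔸) : Summable fun k => (k ! : 𝕂)⁻¹ * τ (X ^ k) := by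
  simpa only [map_smul, smul_eq_mul] using (expSeries_summable' (𝕂 := 𝕂) X).mapL τ

theorem map_sum_pow_mul_mul_pow_of_cyclic (τ : 𝔸 →L[𝕂] 𝕂)
    (hτ : ∀ x y, τ (x * y) = τ (y * x)) (X B : 𝔸) (k : ℕ) :
    τ (∑ i ∈ range k, X ^ (k.pred - i) * B * X ^ i) = k * τ (B * X ^ k.pred) := by
  have hcyc : ∀ i ∈ range k, τ (X ^ (k.pred - i) * B * X ^ i) = τ (B * X ^ k.pred) := by
    intro i hi
    rw [hτ, ← mul_assoc, ← pow_add, Nat.add_sub_cancel' (Nat.le_pred_of_lt (mem_range.1 hi)), hτ]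
  rw [map_sum, sum_congr rfl hcyc, sum_const, card_range, nsmul_eq_mul]

theorem hasDerivAt_map_pow_add_smul_of_cyclic (τ : 𝔸 →L[𝕂] 𝕂)
    (hτ : ∀ x y, τ (x * y) = τ (y * x)) (A B : 𝔸) (k : ℕ) (z : 𝕂) :
    HasDerivAt (fun w : 𝕂 => τ ((A + w • B) ^ k)) (k * τ (B * (A + z • B) ^ k.pred)) z := by
  have hline : HasDerivAt (fun w : 𝕂 => A + w • B) B z := by
    simpa using ((hasDerivAt_id z).smul_const B).const_add A
  rw [← map_sum_pow_mul_mul_pow_of_cyclic τ hτ]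
  exact τ.hasFDerivAt.comp_hasDerivAt z (hline.fun_pow' k)

theorem hasDerivAt_inv_factorial_mul_map_pow_succ_of_cyclic (τ : 𝔸 →L[𝕂] 𝕂)
    (hτ : ∀ x y, τ (x * y) = τ (y * x)) (A B : 𝔸) (k : ℕ) (z : 𝕂) :
    HasDerivAt (fun w : 𝕂 => ((k + 1)! : 𝕂)⁻¹ * τ ((A + w • B) ^ (k + 1)))
      ((k ! : 𝕂)⁻¹ * τ (B * (A + z • B) ^ k)) z := by
  refine ((hasDerivAt_map_pow_add_smul_of_cyclic τ hτ A B (k + 1) z).const_mul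
    ((k + 1)! : 𝕂)⁻¹).congr_deriv ?_
  rw [Nat.factorial_succ, Nat.pred_succ]
  push_cast
  field_simp

theorem hasDerivAt_map_exp_add_smul_of_cyclic [CompleteSpace 𝔸] (τ : 𝔸 →L[𝕂] 𝕂)
    (hτ : ∀ x y, τ (x * y) = τ (y * x)) (A B : 𝔸) (z : 𝕂) :
    HasDerivAt (fun w : 𝕂 => τ (exp (A + w • B))) (τ (B * exp (A + z • B))) z := by
  set R := ‖z‖ + 1
  set r := ‖A‖ + R * ‖B‖
  have hz : z ∈ Metric.ball (0 : 𝕂) R := by simp [R]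
  have hnorm : ∀ w ∈ Metric.ball (0 : 𝕂) R, ‖A + w • B‖ ≤ r := fun w hw => by
    rw [mem_ball_zero_iff] at hw
    calc ‖A + w • B‖ ≤ ‖A‖ + ‖w‖ * ‖B‖ := (norm_add_le _ _).trans_eq (by rw [norm_smul])
      _ ≤ r := by unfold r; gcongr
  have hbound : ∀ k, ∀ w ∈ Metric.ball (0 : 𝕂) R,
      ‖(k ! : 𝕂)⁻¹ * τ (B * (A + w • B) ^ k)‖ ≤ ‖τ‖ * ‖B‖ * (r ^ k / k !) := fun k w hw => by
    calc ‖(k ! : 𝕂)⁻¹ * τ (B * (A + w • B) ^ k)‖ = ‖τ (B * (A + w • B) ^ k)‖ / k ! := by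
          rw [norm_mul, norm_inv, RCLike.norm_natCast, inv_mul_eq_div]
      _ ≤ ‖τ‖ * (‖B‖ * r ^ k) / k ! := by
          gcongr
          refine τ.le_opNorm_of_le ((norm_mul_pow_le_mul_norm_pow _ _ _).trans ?_)
          gcongr
          exact hnorm w hw
      _ = ‖τ‖ * ‖B‖ * (r ^ k / k !) := by ring
  have hderiv := hasDerivAt_tsum_of_isPreconnected
    ((Real.summable_pow_div_factorial r).mul_left (‖τ‖ * ‖B‖)) Metric.isOpen_ball
    (convex_ball (0 : 𝕂) R).isPreconnected
    (fun k w _ => hasDerivAt_inv_factorial_mul_map_pow_succ_of_cyclic τ hτ A B k w) hbound hz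
    ((summable_nat_add_iff 1).2 (τ.summable_inv_factorial_mul_map_pow _)) hz
  have hexp : ∀ w : 𝕂, τ (exp (A + w • B))
      = τ 1 + ∑' k, ((k + 1)! : 𝕂)⁻¹ * τ ((A + w • B) ^ (k + 1)) := fun w => by
    rw [τ.map_exp_eq_tsum, (τ.summable_inv_factorial_mul_map_pow _).tsum_eq_zero_add]
    simp
  have hexpB : τ (B * exp (A + z • B)) = ∑' k, (k ! : 𝕂)⁻¹ * τ (B * (A + z • B) ^ k) := by
    simpa using (τ.comp (ContinuousLinearMap.mul 𝕂 𝔸 B)).map_exp_eq_tsum (A + z • B)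
  simp_rw [hexp, hexpB]
  exact hderiv.const_add (τ 1)

end CyclicFunctional

/-- **Derivative of the partition function.**  For arbitrary `n×n` complex matrices `A, B`,
the map `ε ↦ Tr[exp(A + εB)]` is differentiable at every `t ∈ ℝ` with derivative
`Tr[B exp(A + tB)]`. -/
theorem deriv_trace_exp {n : ℕ} (A B : Matrix (Fin n) (Fin n) ℂ) (t : ℝ) :
    HasDerivAt (fun ε : ℝ => (NormedSpace.exp (A + (ε : ℂ) • B)).trace)
      ((B * NormedSpace.exp (A + (t : ℂ) • B)).trace) t := by
  -- `exp` only sees the topology, which every matrix norm induces; we pick the operator norm.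
  open scoped Matrix.Norms.Operator in
  exact (hasDerivAt_map_exp_add_smul_of_cyclic
    (LinearMap.toContinuousLinearMap (Matrix.traceLinearMap _ ℂ ℂ)) Matrix.trace_mul_comm
    A B (t : ℂ)).comp_ofReal
end
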